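/- arXiv:2210.07869 — 3 statements merged into one kernel-verified Lean document; each statement's English description precedes it below -/
import Mathlib

section
/- If G is an odd bipartite graph (i.e., for every nonempty subset X of W there exists a constraint vertex v in V with |X ∩ N(v)| odd) and G is ordered, then the multipede structure M(G) is asymmetric: its only automorphism is the identity. -/
variable {V W : Type*}

/-- The neighborhood of a constraint vertex, given the ordered triple of its neighbors. -/
def nbrSet (nbr : V → W × W × W) : V → Set W :=
  fun v => {(nbr v).1, (nbr v).2.1, (nbr v).2.2}

/-- The ternary relation of the multipede `M(G)`: for every constraint vertex `v` with
ordered neighbors `(u¹,u²,u³)`, all triples of feet `(u¹_{i₁}, u²_{i₂}, u³_{i₃})` with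
`i₁ + i₂ + i₃ = 0` in `F₂`. Feet are pairs `(segment, index)`. -/
def multiRel (nbr : V → W × W × W) :
    (W × ZMod 2) → (W × ZMod 2) → (W × ZMod 2) → Prop :=
  fun a b c => (∃ v, nbr v = (a.1, b.1, c.1)) ∧ a.2 + b.2 + c.2 = 0

/-- `G` is odd. -/
def OddBipartite' (N : V → Set W) : Prop :=
  ∀ X : Set W, X.Nonempty → ∃ v : V, Odd (N v ∩ X).ncard

/-- If `G` is an odd ordered bipartite graph (every constraint vertex of
degree 3), then the multipede `M(G)` is asymmetric: every automorphism — a permutation of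
the feet preserving the coloring (i.e. the segments) and the ternary relation — is the
identity. -/
theorem multipede_asymmetric {V W : Type*}
    (nbr : V → W × W × W) (hdeg : ∀ v, (nbrSet nbr v).ncard = 3)
    (hodd : OddBipartite' (nbrSet nbr))
    (φ : (W × ZMod 2) ≃ (W × ZMod 2))
    (hseg : ∀ a, (φ a).1 = a.1)
    (hrel : ∀ a b c, multiRel nbr (φ a) (φ b) (φ c) ↔ multiRel nbr a b c) :
    φ = Equiv.refl (W × ZMod 2) := by
  classical
  set f : W → ZMod 2 := fun w => (φ (w, 0)).2 with hf
  have h2 : ∀ x : ZMod 2, x = 0 ∨ x = 1 := by decide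
  -- φ (w, i) = (w, i + f w)
  have hφ : ∀ w (i : ZMod 2), φ (w, i) = (w, i + f w) := by
    intro w i
    have hfw : f w = (φ (w, 0)).2 := rfl
    rcases h2 i with rfl | rfl
    · have h1 := hseg (w, 0)
      rw [Prod.ext_iff]
      exact ⟨h1, by rw [hfw]; ring⟩
    · have h1 := hseg (w, (1 : ZMod 2))
      have hne : φ (w, (1 : ZMod 2)) ≠ φ (w, 0) := by
        intro h
        have := φ.injective h
        rw [Prod.ext_iff] at this
        exact (by decide : (1 : ZMod 2) ≠ 0) this.2
      have h2' : (φ (w, (1 : ZMod 2))).2 ≠ (φ (w, 0)).2 := by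
        intro h
        apply hne
        rw [Prod.ext_iff]
        exact ⟨by rw [h1, hseg (w, 0)], h⟩
      have hkey : (φ (w, (1 : ZMod 2))).2 = 1 + f w := by
        rcases h2 ((φ (w, (1 : ZMod 2))).2) with ha | ha <;>
          rcases h2 ((φ (w, 0)).2) with hb | hb
        · exact absurd (ha.trans hb.symm) h2'
        · rw [ha, hfw, hb]; decide
        · rw [ha, hfw, hb]; decide
        · exact absurd (ha.trans hb.symm) h2'
      rw [Prod.ext_iff]
      exact ⟨h1, hkey⟩
  -- the relation forces the parity sum to vanish on each neighborhood
  have hsum : ∀ v, f (nbr v).1 + f (nbr v).2.1 + f (nbr v).2.2 = 0 := by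
    intro v
    have hR : multiRel nbr ((nbr v).1, 0) ((nbr v).2.1, 0) ((nbr v).2.2, 0) := by
      refine ⟨⟨v, by simp⟩, ?_⟩
      show (0 : ZMod 2) + 0 + 0 = 0
      decide
    have := (hrel ((nbr v).1, 0) ((nbr v).2.1, 0) ((nbr v).2.2, 0)).mpr hR
    obtain ⟨-, hs⟩ := this
    rw [hφ, hφ, hφ] at hs
    simpa using hs
  -- f is identically 0
  have hf0 : ∀ w, f w = 0 := by
    by_contra hcon
    push_neg at hcon
    obtain ⟨w0, hw0⟩ := hcon
    have hw0' : f w0 = 1 := by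
      rcases h2 (f w0) with h | h
      · exact absurd h hw0
      · exact h
    set X : Set W := {w | f w = 1} with hX
    obtain ⟨v, hv⟩ := hodd X ⟨w0, hw0'⟩
    obtain ⟨a, b, c, habc⟩ : ∃ a b c, nbr v = (a, b, c) :=
      ⟨(nbr v).1, (nbr v).2.1, (nbr v).2.2, rfl⟩
    have hsv : f a + f b + f c = 0 := by
      have := hsum v
      rw [habc] at this
      exact this
    have hNv : nbrSet nbr v = {a, b, c} := by simp [nbrSet, habc]
    have hcard := hdeg v
    rw [hNv] at hcard hv
    -- distinctness
    have hab : a ≠ b := by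
      rintro rfl
      have : ({a, a, c} : Set W).ncard ≤ 2 := by
        rw [Set.insert_idem]
        calc ({a, c} : Set W).ncard ≤ ({c} : Set W).ncard + 1 := Set.ncard_insert_le _ _
          _ = 2 := by rw [Set.ncard_singleton]
      omega
    have hac : a ≠ c := by
      rintro rfl
      have h1 : ({a, b, a} : Set W).ncard ≤ 2 := by
        have : ({a, b, a} : Set W) = {a, b} := by
          ext x; simp only [Set.mem_insert_iff, Set.mem_singleton_iff]; tauto
        rw [this]
        calc ({a, b} : Set W).ncard ≤ ({b} : Set W).ncard + 1 := Set.ncard_insert_le _ _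
          _ = 2 := by rw [Set.ncard_singleton]
      omega
    have hbc : b ≠ c := by
      rintro rfl
      have h1 : ({a, b, b} : Set W).ncard ≤ 2 := by
        have : ({a, b, b} : Set W) = {a, b} := by
          ext x; simp only [Set.mem_insert_iff, Set.mem_singleton_iff]; tauto
        rw [this]
        calc ({a, b} : Set W).ncard ≤ ({b} : Set W).ncard + 1 := Set.ncard_insert_le _ _
          _ = 2 := by rw [Set.ncard_singleton]
      omega
    -- case analysis on f a, f b, f c
    have hmem : ∀ x : W, x ∈ X ↔ f x = 1 := fun x => Iff.rfl
    rcases h2 (f a) with ha | ha <;> rcases h2 (f b) with hb | hb <;>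
      rcases h2 (f c) with hc | hc <;>
      simp only [ha, hb, hc] at hsv <;>
      first
      | (exact absurd hsv (by decide))
      | skip
    · -- all zero: intersection empty
      have : ({a, b, c} : Set W) ∩ X = ∅ := by
        ext x
        simp only [Set.mem_inter_iff, Set.mem_empty_iff_false, iff_false]
        rintro ⟨hx, hx2⟩
        rw [hmem] at hx2
        rcases hx with rfl | rfl | rfl
        · rw [ha] at hx2; exact (by decide : (0:ZMod 2) ≠ 1) hx2
        · rw [hb] at hx2; exact (by decide : (0:ZMod 2) ≠ 1) hx2
        · rw [hc] at hx2; exact (by decide : (0:ZMod 2) ≠ 1) hx2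
      rw [this, Set.ncard_empty] at hv
      exact absurd hv (by decide)
    · -- f a = 0, f b = f c = 1: intersection {b, c}
      have : ({a, b, c} : Set W) ∩ X = {b, c} := by
        ext x
        simp only [Set.mem_inter_iff, Set.mem_insert_iff, Set.mem_singleton_iff]
        constructor
        · rintro ⟨hx, hx2⟩
          rw [hmem] at hx2
          rcases hx with rfl | rfl | rfl
          · rw [ha] at hx2; exact absurd hx2 (by decide)
          · exact Or.inl rfl
          · exact Or.inr rfl
        · rintro (rfl | rfl)
          · exact ⟨Or.inr (Or.inl rfl), hb⟩
          · exact ⟨Or.inr (Or.inr rfl), hc⟩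
      rw [this, Set.ncard_pair hbc, Nat.odd_iff] at hv
      omega
    · -- f a = 1, f b = 0, f c = 1: intersection {a, c}
      have : ({a, b, c} : Set W) ∩ X = {a, c} := by
        ext x
        simp only [Set.mem_inter_iff, Set.mem_insert_iff, Set.mem_singleton_iff]
        constructor
        · rintro ⟨hx, hx2⟩
          rw [hmem] at hx2
          rcases hx with rfl | rfl | rfl
          · exact Or.inl rfl
          · rw [hb] at hx2; exact absurd hx2 (by decide)
          · exact Or.inr rfl
        · rintro (rfl | rfl)
          · exact ⟨Or.inl rfl, ha⟩
          · exact ⟨Or.inr (Or.inr rfl), hc⟩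
      rw [this, Set.ncard_pair hac, Nat.odd_iff] at hv
      omega
    · -- f a = 1, f b = 1, f c = 0: intersection {a, b}
      have : ({a, b, c} : Set W) ∩ X = {a, b} := by
        ext x
        simp only [Set.mem_inter_iff, Set.mem_insert_iff, Set.mem_singleton_iff]
        constructor
        · rintro ⟨hx, hx2⟩
          rw [hmem] at hx2
          rcases hx with rfl | rfl | rfl
          · exact Or.inl rfl
          · exact Or.inr rfl
          · rw [hc] at hx2; exact absurd hx2 (by decide)
        · rintro (rfl | rfl)
          · exact ⟨Or.inl rfl, ha⟩
          · exact ⟨Or.inr (Or.inl rfl), hb⟩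
      rw [this, Set.ncard_pair hab, Nat.odd_iff] at hv
      omega
  -- conclude
  apply Equiv.ext
  rintro ⟨w, i⟩
  rw [hφ w i, hf0 w]
  simp
end

section
/- For every function g from the edges of a connected base graph G to F_2, the CFI graphs CFI(G,g) and CFI(G,f) are isomorphic if and only if the sums of g and f over all edges of G are equal in F_2. -/
variable {V : Type*}

/-- A gadget vertex of the CFI graph over base graph `G`: a base vertex `u` together with an
assignment `S : V → F₂` supported on the neighbors of `u` with even sum. -/
def GadgetVert [Fintype V] (G : SimpleGraph V) : Type _ :=
  {p : V × (V → ZMod 2) // (∀ w, ¬ G.Adj p.1 w → p.2 w = 0) ∧ ∑ w, p.2 w = 0}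

/-- An edge vertex of the CFI graph: a directed base edge (its origin) and an index in `F₂`. -/
def EdgeVert (G : SimpleGraph V) : Type _ :=
  {e : V × V // G.Adj e.1 e.2} × ZMod 2

/-- The vertices of the CFI graph over `G`. -/
def CFIVert [Fintype V] (G : SimpleGraph V) : Type _ :=
  GadgetVert G ⊕ EdgeVert G

/-- Adjacency of the CFI graph `CFI(G, f)`: a gadget vertex `(u, S)` is adjacent to the edge
vertex with origin `(u, v)` and index `S v`; the edge vertices with origins `(u, v)` and
`(v, u)` and indices `i`, `j` are matched iff `i + j = f {u,v}`. -/
def CFIAdj [Fintype V] (G : SimpleGraph V) (f : Sym2 V → ZMod 2) :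
    CFIVert G → CFIVert G → Prop
  | Sum.inl g, Sum.inr e => g.val.1 = e.1.val.1 ∧ g.val.2 e.1.val.2 = e.2
  | Sum.inr e, Sum.inl g => g.val.1 = e.1.val.1 ∧ g.val.2 e.1.val.2 = e.2
  | Sum.inr e, Sum.inr e' =>
      e.1.val.1 = e'.1.val.2 ∧ e.1.val.2 = e'.1.val.1 ∧
        e.2 + e'.2 = f s(e.1.val.1, e.1.val.2)
  | _, _ => False

/-- The CFI graph `CFI(G, f)`. -/
def CFIGraph [Fintype V] (G : SimpleGraph V) (f : Sym2 V → ZMod 2) :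
    SimpleGraph (CFIVert G) :=
  SimpleGraph.fromRel (CFIAdj G f)

/-- The origin of a CFI vertex: the base vertex of a gadget vertex, or the directed base edge
of an edge vertex. -/
def CFIorigin [Fintype V] (G : SimpleGraph V) : CFIVert G → V ⊕ (V × V)
  | Sum.inl g => Sum.inl g.val.1
  | Sum.inr e => Sum.inr e.1.val

/-! ### Auxiliary lemmas -/

section ZMod2Lemmas

lemma zmod2_add_self : ∀ a : ZMod 2, a + a = 0 := by decide

lemma zmod2_cancel : ∀ a b : ZMod 2, a + b + b = a := by decide

lemma zmod2_eq_add_of_ne : ∀ a b : ZMod 2, a ≠ b → b = a + 1 := by decide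

lemma zmod2_add_eq_one_of_ne : ∀ a b : ZMod 2, a ≠ b → a + b = 1 := by decide

lemma zmod2_cases : ∀ a : ZMod 2, a = 0 ∨ a = 1 := by decide

lemma zmod2_path : ∀ p q r : ZMod 2, p + r = p + q + (q + r) := by decide

end ZMod2Lemmas

section Realize

variable [Fintype V] (G : SimpleGraph V)

/-- `t` is a twisting scheme realizing the twist `h` on the edges of `G`. -/
def Realizes (t : V → V → ZMod 2) (h : Sym2 V → ZMod 2) : Prop :=
  (∀ u v, ¬ G.Adj u v → t u v = 0) ∧ (∀ u, ∑ v, t u v = 0) ∧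
    (∀ u v, G.Adj u v → t u v + t v u = h s(u, v))

def Realizable (h : Sym2 V → ZMod 2) : Prop := ∃ t, Realizes G t h

variable {G}

lemma Realizable.add {h₁ h₂ : Sym2 V → ZMod 2} (H₁ : Realizable G h₁)
    (H₂ : Realizable G h₂) : Realizable G (h₁ + h₂) := by
  obtain ⟨t₁, a₁, b₁, c₁⟩ := H₁
  obtain ⟨t₂, a₂, b₂, c₂⟩ := H₂
  refine ⟨fun u v => t₁ u v + t₂ u v,
    fun u v h => by dsimp only; rw [a₁ u v h, a₂ u v h, add_zero],
    fun u => by dsimp only; rw [Finset.sum_add_distrib, b₁, b₂, add_zero],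
    fun u v h => ?_⟩
  have e1 := c₁ u v h
  have e2 := c₂ u v h
  dsimp only
  rw [add_add_add_comm, e1, e2, Pi.add_apply]

lemma Realizable.congr {h₁ h₂ : Sym2 V → ZMod 2} (H : Realizable G h₁)
    (hh : h₁ = h₂) : Realizable G h₂ := hh ▸ H

variable [DecidableEq V]

/-- Indicator of a single pair. -/
def ind (e₀ : Sym2 V) : Sym2 V → ZMod 2 := fun e => if e = e₀ then 1 else 0

lemma realizable_pair {u a b : V} (ha : G.Adj u a) (hb : G.Adj u b) :
    Realizable G (ind s(u, a) + ind s(u, b)) := by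
  refine ⟨fun x y => if x = u then
      ((if y = a then 1 else 0) + (if y = b then 1 else 0)) else 0, ?_, ?_, ?_⟩
  · intro x y hxy
    dsimp only
    by_cases hx : x = u
    · subst hx
      have hna : ¬ y = a := fun h => hxy (by rw [h]; exact ha)
      have hnb : ¬ y = b := fun h => hxy (by rw [h]; exact hb)
      rw [if_pos rfl, if_neg hna, if_neg hnb, add_zero]
    · rw [if_neg hx]
  · intro x
    dsimp only
    by_cases hx : x = u
    · subst hx
      simp only [eq_self_iff_true, if_true]
      rw [Finset.sum_add_distrib]
      rw [Finset.sum_ite_eq' Finset.univ a (fun _ => (1 : ZMod 2)),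
        Finset.sum_ite_eq' Finset.univ b (fun _ => (1 : ZMod 2))]
      simp only [Finset.mem_univ, if_true]
      decide
    · simp only [if_neg hx]
      exact Finset.sum_const_zero
  · intro x y hxy
    dsimp only
    simp only [Pi.add_apply, ind]
    by_cases hx : x = u
    · have hyu : ¬ y = u := by
        intro h
        rw [hx, h] at hxy
        exact G.irrefl hxy
      rw [if_pos hx, if_neg hyu, add_zero, hx]
      have h1 : (s(u, y) = s(u, a)) ↔ y = a := Sym2.congr_right
      have h2 : (s(u, y) = s(u, b)) ↔ y = b := Sym2.congr_right
      rw [show (if s(u,y) = s(u,a) then (1:ZMod 2) else 0) = (if y = a then 1 else 0) by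
          simp [h1],
        show (if s(u,y) = s(u,b) then (1:ZMod 2) else 0) = (if y = b then 1 else 0) by
          simp [h2]]
    · rw [if_neg hx]
      by_cases hy : y = u
      · rw [if_pos hy, zero_add, hy]
        have h1 : (s(x, u) = s(u, a)) ↔ x = a := by
          rw [Sym2.eq_swap (a := x)]; exact Sym2.congr_right
        have h2 : (s(x, u) = s(u, b)) ↔ x = b := by
          rw [Sym2.eq_swap (a := x)]; exact Sym2.congr_right
        rw [show (if s(x,u) = s(u,a) then (1:ZMod 2) else 0) = (if x = a then 1 else 0) by
            simp [h1],
          show (if s(x,u) = s(u,b) then (1:ZMod 2) else 0) = (if x = b then 1 else 0) by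
            simp [h2]]
      · rw [if_neg hy]
        have hmem : ∀ c : V, G.Adj u c → s(x, y) ≠ s(u, c) := by
          intro c _ hEq
          have : u ∈ s(x, y) := hEq ▸ Sym2.mem_mk_left u c
          rcases Sym2.mem_iff.mp this with h | h
          · exact hx h.symm
          · exact hy h.symm
        rw [if_neg (hmem a ha), if_neg (hmem b hb), add_zero]

lemma realizable_walk {x y : V} (w : G.Walk x y) :
    ∀ {a b : V}, G.Adj x a → G.Adj y b → Realizable G (ind s(x, a) + ind s(y, b)) := by
  induction w with
  | nil => exact fun ha hb => realizable_pair ha hb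
  | @cons x z y h p ih =>
    intro a b ha hb
    have H1 : Realizable G (ind s(x, a) + ind s(x, z)) := realizable_pair ha h
    have H2 : Realizable G (ind s(z, x) + ind s(y, b)) := ih h.symm hb
    refine (H1.add H2).congr ?_
    have hswap : ind (V := V) s(z, x) = ind s(x, z) := by
      rw [Sym2.eq_swap]
    rw [hswap]
    funext e
    simp only [Pi.add_apply]
    exact (zmod2_path (ind s(x,a) e) (ind s(x,z) e) (ind s(y,b) e)).symm

lemma realizable_even (hconn : G.Connected) :
    ∀ n (s : Finset (Sym2 V)), s.card = n → (↑s : Set (Sym2 V)) ⊆ G.edgeSet →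
      Even s.card → Realizable G (fun e => if e ∈ s then 1 else 0) := by
  intro n
  induction n using Nat.strong_induction_on with
  | _ n ih =>
    intro s hcard hsub heven
    rcases s.eq_empty_or_nonempty with rfl | ⟨e₁, he₁⟩
    · exact ⟨0, fun _ _ _ => rfl, fun u => by simp, fun u v _ => by simp⟩
    · have hone : 1 ≤ s.card := Finset.card_pos.mpr ⟨e₁, he₁⟩
      have htwo : 2 ≤ s.card := by
        obtain ⟨k, hk⟩ := heven; omega
      obtain ⟨e₂, he₂⟩ : (s.erase e₁).Nonempty := by
        rw [← Finset.card_pos, Finset.card_erase_of_mem he₁]; omega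
      have hne12 : e₁ ≠ e₂ := fun h => (Finset.ne_of_mem_erase he₂) h.symm
      have hrep : ∀ e ∈ s, ∃ u v, ∃ _ : G.Adj u v, e = s(u, v) := by
        intro e he
        have he' : e ∈ G.edgeSet := hsub (Finset.mem_coe.mpr he)
        revert he'
        induction e using Sym2.ind with
        | _ u v => exact fun h => ⟨u, v, h, rfl⟩
      obtain ⟨u₁, v₁, h₁, heq₁⟩ := hrep e₁ he₁
      obtain ⟨u₂, v₂, h₂, heq₂⟩ := hrep e₂ (Finset.mem_of_mem_erase he₂)
      obtain ⟨w⟩ := hconn.preconnected u₁ u₂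
      have Hw : Realizable G (ind s(u₁, v₁) + ind s(u₂, v₂)) := realizable_walk w h₁ h₂
      set s' := (s.erase e₁).erase e₂ with hs'
      have hcard' : s'.card = n - 2 := by
        rw [hs', Finset.card_erase_of_mem he₂, Finset.card_erase_of_mem he₁, hcard]
        omega
      have Hs' : Realizable G (fun e => if e ∈ s' then 1 else 0) := by
        refine ih (n - 2) (by omega) s' hcard' ?_ ?_
        · intro e he
          exact hsub (Finset.mem_coe.mpr
            (Finset.mem_of_mem_erase (Finset.mem_of_mem_erase (Finset.mem_coe.mp he))))
        · rw [hcard']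
          obtain ⟨k, hk⟩ := heven
          exact ⟨k - 1, by omega⟩
      refine (Hw.add Hs').congr ?_
      rw [← heq₁, ← heq₂]
      funext e
      simp only [Pi.add_apply, ind]
      by_cases hA : e = e₁
      · subst hA
        rw [if_pos rfl, if_neg hne12, if_pos he₁, add_zero,
          if_neg (by simp [hs', Finset.mem_erase])]
        exact add_zero 1
      · by_cases hB : e = e₂
        · subst hB
          rw [if_neg (fun h => hne12 h.symm), if_pos rfl, zero_add,
            if_pos (Finset.mem_of_mem_erase he₂),
            if_neg (by simp [hs', Finset.mem_erase])]
          exact add_zero 1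
        · rw [if_neg hA, if_neg hB, add_zero, zero_add]
          have : e ∈ s' ↔ e ∈ s := by
            simp [hs', Finset.mem_erase, hA, hB]
          simp [this]

end Realize

/-! ### The twisting isomorphism -/

section Twist

variable [Fintype V] (G : SimpleGraph V)

def twistMap (t : V → V → ZMod 2) (ht0 : ∀ u v, ¬ G.Adj u v → t u v = 0)
    (ht1 : ∀ u, ∑ v, t u v = 0) : CFIVert G → CFIVert G :=
  Sum.map
    (fun p => (⟨(p.val.1, fun w => p.val.2 w + t p.val.1 w),
      fun w hw => by
        show p.val.2 w + t p.val.1 w = 0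
        rw [p.prop.1 w hw, ht0 _ _ hw, add_zero],
      by
        show ∑ w, (p.val.2 w + t p.val.1 w) = 0
        rw [Finset.sum_add_distrib, p.prop.2, ht1, add_zero]⟩ : GadgetVert G))
    (fun e => (e.1, e.2 + t e.1.val.1 e.1.val.2))

variable {G}
variable (t : V → V → ZMod 2)

lemma twistMap_invol (ht0 : ∀ u v, ¬ G.Adj u v → t u v = 0)
    (ht1 : ∀ u, ∑ v, t u v = 0) : Function.Involutive (twistMap G t ht0 ht1) := by
  rintro (p | e)
  · exact congrArg Sum.inl (Subtype.ext
      (congrArg (Prod.mk p.val.1) (funext fun w => zmod2_cancel _ _)))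
  · exact congrArg Sum.inr (congrArg (Prod.mk e.1) (zmod2_cancel _ _))

lemma twistMap_adj (ht0 : ∀ u v, ¬ G.Adj u v → t u v = 0)
    (ht1 : ∀ u, ∑ v, t u v = 0) {g f : Sym2 V → ZMod 2}
    (hgf : ∀ u v, G.Adj u v → f s(u, v) = g s(u, v) + (t u v + t v u)) :
    ∀ x y, CFIAdj G g x y → CFIAdj G f (twistMap G t ht0 ht1 x) (twistMap G t ht0 ht1 y) := by
  rintro (p | e) (p' | e') h
  · exact h.elim
  · obtain ⟨h1, h2⟩ := h
    refine ⟨h1, ?_⟩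
    show p.val.2 e'.1.val.2 + t p.val.1 e'.1.val.2 = e'.2 + t e'.1.val.1 e'.1.val.2
    rw [h2, h1]
  · obtain ⟨h1, h2⟩ := h
    refine ⟨h1, ?_⟩
    show p'.val.2 e.1.val.2 + t p'.val.1 e.1.val.2 = e.2 + t e.1.val.1 e.1.val.2
    rw [h2, h1]
  · obtain ⟨h1, h2, h3⟩ := h
    refine ⟨h1, h2, ?_⟩
    show e.2 + t e.1.val.1 e.1.val.2 + (e'.2 + t e'.1.val.1 e'.1.val.2)
        = f s(e.1.val.1, e.1.val.2)
    rw [hgf _ _ e.1.prop, ← h1, ← h2, ← h3]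
    ring

lemma iso_of_twist (ht0 : ∀ u v, ¬ G.Adj u v → t u v = 0)
    (ht1 : ∀ u, ∑ v, t u v = 0) {g f : Sym2 V → ZMod 2}
    (hgf : ∀ u v, G.Adj u v → f s(u, v) = g s(u, v) + (t u v + t v u)) :
    ∃ φ : CFIGraph G g ≃g CFIGraph G f, ∀ x, CFIorigin G (φ x) = CFIorigin G x := by
  have hfg : ∀ u v, G.Adj u v → g s(u, v) = f s(u, v) + (t u v + t v u) := by
    intro u v h
    rw [hgf u v h]
    exact (zmod2_cancel _ _).symm
  have hinv := twistMap_invol t ht0 ht1 (G := G)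
  have hinj : Function.Injective (twistMap G t ht0 ht1) := hinv.injective
  have hAdj : ∀ {g' f' : Sym2 V → ZMod 2},
      (∀ u v, G.Adj u v → f' s(u, v) = g' s(u, v) + (t u v + t v u)) →
      ∀ x y, (CFIGraph G g').Adj x y →
        (CFIGraph G f').Adj (twistMap G t ht0 ht1 x) (twistMap G t ht0 ht1 y) := by
    intro g' f' h' x y hxy
    rw [CFIGraph, SimpleGraph.fromRel_adj] at hxy ⊢
    exact ⟨fun he => hxy.1 (hinj he),
      hxy.2.imp (twistMap_adj t ht0 ht1 h' x y) (twistMap_adj t ht0 ht1 h' y x)⟩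
  have hiff : ∀ a b, (CFIGraph G f).Adj (twistMap G t ht0 ht1 a) (twistMap G t ht0 ht1 b) ↔
      (CFIGraph G g).Adj a b := by
    intro a b
    constructor
    · intro h
      have := hAdj hfg _ _ h
      rwa [hinv a, hinv b] at this
    · intro h
      exact hAdj hgf a b h
  refine ⟨⟨⟨twistMap G t ht0 ht1, twistMap G t ht0 ht1, hinv, hinv⟩,
    fun {a b} => hiff a b⟩, ?_⟩
  rintro (p | e) <;> rfl

end Twist

/-! ### From isomorphism to parity -/

section Forward

variable [Fintype V] [DecidableEq V] (G : SimpleGraph V) [DecidableRel G.Adj]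

lemma edge_rep {e : Sym2 V} (he : e ∈ G.edgeFinset) :
    ∃ u v, ∃ _ : G.Adj u v, e = s(u, v) := by
  have he' : e ∈ G.edgeSet := SimpleGraph.mem_edgeFinset.mp he
  revert he'
  induction e using Sym2.ind with
  | _ u v => exact fun h => ⟨u, v, h, rfl⟩

variable {G}

lemma sum_edge_twist (t : V → V → ZMod 2) (ht0 : ∀ u v, ¬ G.Adj u v → t u v = 0)
    (ht1 : ∀ u, ∑ v, t u v = 0) :
    ∑ e ∈ G.edgeFinset,
      Sym2.lift ⟨fun u v => t u v + t v u, fun _ _ => add_comm _ _⟩ e = 0 := by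
  set q : Sym2 V → ZMod 2 :=
    Sym2.lift ⟨fun u v => t u v + t v u, fun _ _ => add_comm _ _⟩ with hq
  have fib : ∀ e ∈ G.edgeFinset,
      ∑ d ∈ Finset.univ.filter (fun d : G.Dart => d.edge = e), t d.toProd.1 d.toProd.2
        = q e := by
    intro e he
    obtain ⟨u, v, h, rfl⟩ := edge_rep G he
    have hD : (Finset.univ.filter (fun d : G.Dart => d.edge = s(u, v)))
        = {(⟨(u, v), h⟩ : G.Dart), (⟨(u, v), h⟩ : G.Dart).symm} := by
      exact SimpleGraph.Dart.edge_fiber (⟨(u, v), h⟩ : G.Dart)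
    rw [hD, Finset.sum_pair (SimpleGraph.Dart.symm_ne (⟨(u, v), h⟩ : G.Dart)).symm]
    rfl
  have h1 : ∑ e ∈ G.edgeFinset, q e = ∑ d : G.Dart, t d.toProd.1 d.toProd.2 := by
    rw [← Finset.sum_fiberwise_of_maps_to
      (fun (d : G.Dart) (_ : d ∈ Finset.univ) =>
        SimpleGraph.mem_edgeFinset.mpr d.edge_mem) (fun d => t d.toProd.1 d.toProd.2)]
    exact (Finset.sum_congr rfl fib).symm
  have h2 : ∑ d : G.Dart, t d.toProd.1 d.toProd.2 = ∑ p : V × V, t p.1 p.2 := by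
    rw [← Finset.sum_filter_of_ne (p := fun p : V × V => G.Adj p.1 p.2)
      (fun p _ hp => by
        by_contra hc
        exact hp (ht0 _ _ hc))]
    refine Finset.sum_bij' (fun (d : G.Dart) (_ : d ∈ Finset.univ) => d.toProd)
      (fun p hp => (⟨p, (Finset.mem_filter.mp hp).2⟩ : G.Dart)) ?_ ?_ ?_ ?_ ?_
    · intro d _
      simp only [Finset.mem_filter, Finset.mem_univ, true_and]
      exact d.adj
    · intro p hp
      exact Finset.mem_univ _
    · intro d _
      rfl
    · intro p hp
      rfl
    · intro d _
      rfl
  have h3 : ∑ p : V × V, t p.1 p.2 = 0 := by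
    rw [Fintype.sum_prod_type]
    exact Finset.sum_eq_zero fun u _ => ht1 u
  rw [h1, h2, h3]

lemma parity_of_iso {g f : Sym2 V → ZMod 2} (φ : CFIGraph G g ≃g CFIGraph G f)
    (hor : ∀ x, CFIorigin G (φ x) = CFIorigin G x) :
    ∑ e ∈ G.edgeFinset, g e = ∑ e ∈ G.edgeFinset, f e := by
  -- Step A : φ maps edge vertices to edge vertices with the same origin
  have hedge : ∀ (d : {e : V × V // G.Adj e.1 e.2}) (i : ZMod 2),
      ∃ j, φ (Sum.inr (d, i)) = Sum.inr (d, j) := by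
    intro d i
    have h := hor (Sum.inr (d, i))
    rcases hφ : φ (Sum.inr (d, i)) with p | e
    · rw [hφ] at h
      exact absurd h (by simp [CFIorigin])
    · rw [hφ] at h
      have h' : (Sum.inr e.1.val : V ⊕ (V × V)) = Sum.inr d.val := h
      have h1 : e.1 = d := Subtype.ext (Sum.inr.inj h')
      refine ⟨e.2, ?_⟩
      rw [← h1]
      rfl
  choose out hout using hedge
  -- Step B : φ maps gadget vertices to gadget vertices with the same origin
  have hgad : ∀ p : GadgetVert G, ∃ q : GadgetVert G,
      φ (Sum.inl p) = Sum.inl q ∧ q.val.1 = p.val.1 := by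
    intro p
    have h := hor (Sum.inl p)
    rcases hφ : φ (Sum.inl p) with q | e
    · rw [hφ] at h
      have h' : (Sum.inl q.val.1 : V ⊕ (V × V)) = Sum.inl p.val.1 := h
      exact ⟨q, rfl, Sum.inl.inj h'⟩
    · rw [hφ] at h
      exact absurd h (by simp [CFIorigin])
  choose gout hgout1 hgout2 using hgad
  -- The twisting scheme
  set t : V → V → ZMod 2 :=
    fun u v => if h : G.Adj u v then out ⟨(u, v), h⟩ 0 else 0 with ht_def
  have ht0 : ∀ u v, ¬ G.Adj u v → t u v = 0 := fun u v h => dif_neg h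
  -- out as an affine map
  have hout1 : ∀ (d : {e : V × V // G.Adj e.1 e.2}) (i : ZMod 2),
      out d i = i + out d 0 := by
    intro d i
    rcases zmod2_cases i with rfl | rfl
    · rw [zero_add]
    · have hne : out d 1 ≠ out d 0 := by
        intro hcontr
        have heq : φ (Sum.inr (d, 1)) = φ (Sum.inr (d, 0)) := by
          rw [hout d 1, hout d 0, hcontr]
        have := φ.injective heq
        have h2 : ((d, (1 : ZMod 2)) : EdgeVert G) = (d, 0) := Sum.inr.inj this
        have h3 : (1 : ZMod 2) = 0 := congrArg Prod.snd h2
        exact one_ne_zero h3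
      revert hne
      generalize out d 1 = a
      generalize out d 0 = b
      revert a b
      decide
  have hT : ∀ (d : {e : V × V // G.Adj e.1 e.2}) (i : ZMod 2),
      out d i = i + t d.val.1 d.val.2 := by
    intro d i
    rw [hout1 d i]
    congr 1
    show out d 0 = if h : G.Adj d.val.1 d.val.2 then out ⟨(d.val.1, d.val.2), h⟩ 0 else 0
    rw [dif_pos d.prop]
  -- Row sums are zero
  have ht1 : ∀ u, ∑ v, t u v = 0 := by
    intro u
    set p0 : GadgetVert G := ⟨(u, fun _ => 0), fun _ _ => rfl, by simp⟩ with hp0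
    set q := gout p0 with hqdef
    have hq1 : q.val.1 = u := hgout2 p0
    have hval : ∀ v, q.val.2 v = t u v := by
      intro v
      by_cases hadj : G.Adj u v
      · have hx : (CFIGraph G g).Adj (Sum.inl p0) (Sum.inr (⟨(u, v), hadj⟩, 0)) := by
          change _ ≠ _ ∧ (CFIAdj G g _ _ ∨ CFIAdj G g _ _)
          exact ⟨Sum.inl_ne_inr, Or.inl ⟨rfl, rfl⟩⟩
        have himg := φ.map_adj_iff.mpr hx
        rw [hgout1 p0, hout ⟨(u, v), hadj⟩ 0] at himg
        change _ ≠ _ ∧ (CFIAdj G f _ _ ∨ CFIAdj G f _ _) at himg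
        rcases himg.2 with hc | hc
        · rw [hc.2, hT ⟨(u, v), hadj⟩ 0, zero_add]
        · rw [hc.2, hT ⟨(u, v), hadj⟩ 0, zero_add]
      · rw [ht0 u v hadj]
        exact q.prop.1 v (by rw [hq1]; exact hadj)
    have := q.prop.2
    rw [← this]
    exact Finset.sum_congr rfl fun v _ => (hval v).symm
  -- The parity relation on each edge
  have hgf : ∀ u v, G.Adj u v → f s(u, v) = g s(u, v) + (t u v + t v u) := by
    intro u v h
    have hx : (CFIGraph G g).Adj (Sum.inr (⟨(u, v), h⟩, 0))
        (Sum.inr (⟨(v, u), h.symm⟩, g s(u, v))) := by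
      change _ ≠ _ ∧ (CFIAdj G g _ _ ∨ CFIAdj G g _ _)
      refine ⟨?_, Or.inl ⟨rfl, rfl, by rw [zero_add]⟩⟩
      intro hc
      have h2 : ((⟨(u, v), h⟩ : {e : V × V // G.Adj e.1 e.2}), (0 : ZMod 2))
          = (⟨(v, u), h.symm⟩, g s(u, v)) := Sum.inr.inj hc
      have h3 : (⟨(u, v), h⟩ : {e : V × V // G.Adj e.1 e.2}) = ⟨(v, u), h.symm⟩ :=
        congrArg Prod.fst h2
      exact h.ne (congrArg (fun z => z.val.1) h3)
    have himg := φ.map_adj_iff.mpr hx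
    rw [hout ⟨(u, v), h⟩ 0, hout ⟨(v, u), h.symm⟩ (g s(u, v))] at himg
    change _ ≠ _ ∧ (CFIAdj G f _ _ ∨ CFIAdj G f _ _) at himg
    have key : out ⟨(u, v), h⟩ 0 + out ⟨(v, u), h.symm⟩ (g s(u, v)) = f s(u, v) := by
      rcases himg.2 with hc | hc
      · exact hc.2.2
      · have hval := hc.2.2
        rw [add_comm] at hval
        rw [show s(v, u) = s(u, v) from Sym2.eq_swap] at hval
        exact hval
    rw [hT ⟨(u, v), h⟩ 0, hT ⟨(v, u), h.symm⟩ (g s(u, v))] at key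
    rw [← key]
    show 0 + t u v + (g s(u, v) + t v u) = _
    ring
  -- Conclude by summation
  have hfg_edges : ∀ e ∈ G.edgeFinset,
      f e = g e + Sym2.lift ⟨fun u v => t u v + t v u, fun _ _ => add_comm _ _⟩ e := by
    intro e he
    obtain ⟨u, v, h, rfl⟩ := edge_rep G he
    exact hgf u v h
  have hfsum : ∑ e ∈ G.edgeFinset, f e
      = ∑ e ∈ G.edgeFinset, (g e +
          Sym2.lift ⟨fun u v => t u v + t v u, fun _ _ => add_comm _ _⟩ e) :=
    Finset.sum_congr rfl hfg_edges
  rw [hfsum, Finset.sum_add_distrib, sum_edge_twist t ht0 ht1, add_zero]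

end Forward

/-- For every `g, f : E → F₂` on a connected ordered base graph `G`,
the CFI graphs `CFI(G,g)` and `CFI(G,f)` are isomorphic (as colored graphs, i.e. by an
isomorphism preserving origins — each base vertex and directed base edge has its own color
since `G` is ordered) iff `∑ g = ∑ f` in `F₂`. -/
theorem cfi_iso_iff_parity {V : Type*} [Fintype V] [LinearOrder V]
    (G : SimpleGraph V) (hconn : G.Connected) (g f : Sym2 V → ZMod 2) :
    (∃ φ : CFIGraph G g ≃g CFIGraph G f, ∀ x, CFIorigin G (φ x) = CFIorigin G x) ↔
      (∑ᶠ e ∈ G.edgeSet, g e) = (∑ᶠ e ∈ G.edgeSet, f e) := by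
  haveI : DecidableRel G.Adj := Classical.decRel _
  rw [← SimpleGraph.coe_edgeFinset, finsum_mem_coe_finset, finsum_mem_coe_finset]
  constructor
  · rintro ⟨φ, hor⟩
    exact parity_of_iso φ hor
  · intro hsum
    set S := G.edgeFinset.filter (fun e => g e ≠ f e) with hS
    have hSsub : (↑S : Set (Sym2 V)) ⊆ G.edgeSet := fun e he =>
      SimpleGraph.mem_edgeFinset.mp (Finset.mem_filter.mp (Finset.mem_coe.mp he)).1
    have heven : Even S.card := by
      have h1 : ∑ e ∈ G.edgeFinset, (g e + f e) = 0 := by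
        rw [Finset.sum_add_distrib, hsum]
        exact zmod2_add_self _
      have h2 : ∑ e ∈ S, (g e + f e) = ∑ e ∈ G.edgeFinset, (g e + f e) := by
        rw [hS]
        exact Finset.sum_filter_of_ne fun e _ hne hc =>
          hne (by rw [hc]; exact zmod2_add_self _)
      have h3 : ∑ e ∈ S, (g e + f e) = ∑ e ∈ S, (1 : ZMod 2) :=
        Finset.sum_congr rfl fun e he =>
          zmod2_add_eq_one_of_ne _ _ (Finset.mem_filter.mp he).2
      rw [Finset.sum_const, nsmul_eq_mul, mul_one] at h3
      have h0 : ((S.card : ZMod 2)) = 0 := by rw [← h3, h2, h1]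
      obtain ⟨k, hk⟩ := (ZMod.natCast_eq_zero_iff S.card 2).mp h0
      exact ⟨k, by omega⟩
    obtain ⟨t, ht0, ht1, ht2⟩ := realizable_even hconn S.card S rfl hSsub heven
    refine iso_of_twist t ht0 ht1 ?_
    intro u v h
    have hval : t u v + t v u = if s(u, v) ∈ S then 1 else 0 := ht2 u v h
    by_cases hmem : s(u, v) ∈ S
    · rw [if_pos hmem] at hval
      rw [hval]
      exact zmod2_eq_add_of_ne _ _ (Finset.mem_filter.mp hmem).2
    · rw [if_neg hmem] at hval
      rw [hval, add_zero]
      by_contra hne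
      exact hmem (Finset.mem_filter.mpr
        ⟨SimpleGraph.mem_edgeFinset.mpr h, fun h' => hne h'.symm⟩)
end

section
/- In a color class join J = J_cc(G_1, ..., G_l), if two part vertices v and v' lie in the same orbit of the automorphism group of J, then the part containing v is isomorphic to the part containing v'. -/
variable {l c : ℕ} {Vt : Fin l → Type*}

/-- The relation generating the color class join of the colored graphs `G i`:
edges inside each part, plus an edge between the `j`-th join vertex and every part vertex of
color `j`. -/
def ccJoinRel (G : ∀ i, SimpleGraph (Vt i)) (col : ∀ i, Vt i → Fin c) :
    ((Σ i, Vt i) ⊕ Fin c) → ((Σ i, Vt i) ⊕ Fin c) → Prop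
  | Sum.inl p, Sum.inl q => ∃ h : q.1 = p.1, (G p.1).Adj p.2 (h ▸ q.2)
  | Sum.inl p, Sum.inr j => col p.1 p.2 = j
  | Sum.inr j, Sum.inl p => col p.1 p.2 = j
  | Sum.inr _, Sum.inr _ => False

/-- The color class join `J_cc(G₁, …, G_l)`. -/
def ccJoin (G : ∀ i, SimpleGraph (Vt i)) (col : ∀ i, Vt i → Fin c) :
    SimpleGraph ((Σ i, Vt i) ⊕ Fin c) :=
  SimpleGraph.fromRel (ccJoinRel G col)

/-- The coloring of the color class join: part vertices keep their (merged) colors, each join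
vertex gets its own new color. -/
def jColor (col : ∀ i, Vt i → Fin c) : ((Σ i, Vt i) ⊕ Fin c) → Fin c ⊕ Fin c
  | Sum.inl p => Sum.inl (col p.1 p.2)
  | Sum.inr j => Sum.inr j

lemma ccJoin_part_eq {G : ∀ i, SimpleGraph (Vt i)} {col : ∀ i, Vt i → Fin c}
    {p q : Σ i, Vt i} (h : (ccJoin G col).Adj (Sum.inl p) (Sum.inl q)) : q.1 = p.1 := by
  rcases h with ⟨-, h | h⟩
  · exact h.1
  · exact h.1.symm

lemma ccJoin_adj_iff {G : ∀ i, SimpleGraph (Vt i)} {col : ∀ i, Vt i → Fin c}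
    {i : Fin l} {y z : Vt i} :
    (ccJoin G col).Adj (Sum.inl ⟨i, y⟩) (Sum.inl ⟨i, z⟩) ↔ (G i).Adj y z := by
  constructor
  · rintro ⟨-, h | h⟩
    · exact h.2
    · exact h.2.symm
  · intro h
    refine ⟨?_, Or.inl ⟨rfl, h⟩⟩
    intro hh
    apply h.ne
    simpa using hh

lemma ccJoin_inl_to_inl {G : ∀ i, SimpleGraph (Vt i)} {col : ∀ i, Vt i → Fin c}
    (φ : ccJoin G col ≃g ccJoin G col)
    (hcol : ∀ a, jColor col (φ a) = jColor col a) (p : Σ i, Vt i) :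
    ∃ q, φ (Sum.inl p) = Sum.inl q := by
  have h := hcol (Sum.inl p)
  cases hφ : φ (Sum.inl p) with
  | inl q => exact ⟨q, rfl⟩
  | inr j => rw [hφ] at h; simp [jColor] at h

lemma ccJoin_aux {G : ∀ i, SimpleGraph (Vt i)} {col : ∀ i, Vt i → Fin c}
    (hconn : ∀ i, (G i).Connected)
    (i i' : Fin l) (x : Vt i) (x' : Vt i')
    (φ : ccJoin G col ≃g ccJoin G col)
    (hcol : ∀ a, jColor col (φ a) = jColor col a)
    (hmap : φ (Sum.inl ⟨i, x⟩) = Sum.inl ⟨i', x'⟩) (y : Vt i) :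
    ∃ w : Vt i', φ (Sum.inl ⟨i, y⟩) = Sum.inl ⟨i', w⟩ := by
  have step : ∀ {u v : Vt i}, (G i).Adj u v →
      (∃ w : Vt i', φ (Sum.inl ⟨i, u⟩) = Sum.inl ⟨i', w⟩) →
      ∃ w : Vt i', φ (Sum.inl ⟨i, v⟩) = Sum.inl ⟨i', w⟩ := by
    rintro u v huv ⟨w, hw⟩
    obtain ⟨q, hq⟩ := ccJoin_inl_to_inl φ hcol ⟨i, v⟩
    have hadj : (ccJoin G col).Adj (φ (Sum.inl ⟨i, u⟩)) (φ (Sum.inl ⟨i, v⟩)) :=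
      φ.map_adj_iff.mpr (ccJoin_adj_iff.mpr huv)
    rw [hw, hq] at hadj
    have hpart : q.1 = i' := ccJoin_part_eq hadj
    obtain ⟨j, qv⟩ := q
    subst hpart
    exact ⟨qv, hq⟩
  have key : ∀ (u v : Vt i), (G i).Walk u v →
      (∃ w : Vt i', φ (Sum.inl ⟨i, u⟩) = Sum.inl ⟨i', w⟩) →
      ∃ w : Vt i', φ (Sum.inl ⟨i, v⟩) = Sum.inl ⟨i', w⟩ := by
    intro u v W
    induction W with
    | nil => exact id
    | cons h _ ih => exact fun hu => ih (step h hu)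
  obtain ⟨W⟩ := (hconn i) x y
  exact key x y W ⟨x', hmap⟩

/-- In a color class join `J = J_cc(G₁, …, G_l)` of connected colored
graphs, if two part vertices lie in the same orbit of the (color-preserving) automorphism
group of `J`, then their parts are isomorphic as colored graphs. -/
theorem ccJoin_orbit_parts_iso {l c : ℕ} {Vt : Fin l → Type*}
    (G : ∀ i, SimpleGraph (Vt i)) (col : ∀ i, Vt i → Fin c)
    (hconn : ∀ i, (G i).Connected)
    (i i' : Fin l) (x : Vt i) (x' : Vt i')
    (φ : ccJoin G col ≃g ccJoin G col)
    (hcol : ∀ a, jColor col (φ a) = jColor col a)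
    (hmap : φ (Sum.inl ⟨i, x⟩) = Sum.inl ⟨i', x'⟩) :
    ∃ e : G i ≃g G i', ∀ z, col i' (e z) = col i z := by
  have hcol' : ∀ a, jColor col (φ.symm a) = jColor col a := by
    intro a
    have := hcol (φ.symm a)
    rw [φ.apply_symm_apply] at this
    exact this.symm
  have hmap' : φ.symm (Sum.inl ⟨i', x'⟩) = Sum.inl ⟨i, x⟩ := by
    rw [← hmap, φ.symm_apply_apply]
  have hf := fun y => ccJoin_aux hconn i i' x x' φ hcol hmap y
  have hg := fun w => ccJoin_aux hconn i' i x' x φ.symm hcol' hmap' w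
  set f : Vt i → Vt i' := fun y => (hf y).choose with hfdef
  set g : Vt i' → Vt i := fun w => (hg w).choose with hgdef
  have hfspec : ∀ y, φ (Sum.inl ⟨i, y⟩) = Sum.inl ⟨i', f y⟩ := fun y => (hf y).choose_spec
  have hgspec : ∀ w, φ.symm (Sum.inl ⟨i', w⟩) = Sum.inl ⟨i, g w⟩ := fun w => (hg w).choose_spec
  have hleft : ∀ y, g (f y) = y := by
    intro y
    have h1 : φ.symm (Sum.inl ⟨i', f y⟩) = Sum.inl ⟨i, y⟩ := by
      rw [← hfspec y, φ.symm_apply_apply]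
    have := (hgspec (f y)).symm.trans h1
    simpa using this
  have hright : ∀ w, f (g w) = w := by
    intro w
    have h1 : φ (Sum.inl ⟨i, g w⟩) = Sum.inl ⟨i', w⟩ := by
      rw [← hgspec w, φ.apply_symm_apply]
    have := (hfspec (g w)).symm.trans h1
    simpa using this
  have hadj : ∀ y z, (G i').Adj (f y) (f z) ↔ (G i).Adj y z := by
    intro y z
    constructor
    · intro h
      have : (ccJoin G col).Adj (φ (Sum.inl ⟨i, y⟩)) (φ (Sum.inl ⟨i, z⟩)) := by
        rw [hfspec y, hfspec z]
        exact ccJoin_adj_iff.mpr h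
      exact ccJoin_adj_iff.mp (φ.map_adj_iff.mp this)
    · intro h
      have : (ccJoin G col).Adj (φ (Sum.inl ⟨i, y⟩)) (φ (Sum.inl ⟨i, z⟩)) :=
        φ.map_adj_iff.mpr (ccJoin_adj_iff.mpr h)
      rw [hfspec y, hfspec z] at this
      exact ccJoin_adj_iff.mp this
  refine ⟨⟨⟨f, g, hleft, hright⟩, ?_⟩, ?_⟩
  · intro a b
    exact hadj a b
  · intro z
    have := hcol (Sum.inl ⟨i, z⟩)
    rw [hfspec z] at this
    simpa [jColor] using this
end
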